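/- Let P₁,…,P_q be orthogonal projection matrices in ℝ^{d×d} onto subspaces 𝒫₁,…,𝒫_q. If ⋂_{k=1}^q 𝒫_k = {0}, then the operator 2-norm of the product P_q ⋯ P₂ P₁ is strictly less than 1. -/

import Mathlib

open Matrix

/-- The operator 2-norm of a real `d × d` matrix (the norm induced by the
Euclidean norm). -/
noncomputable def opNorm2 {d : ℕ} (M : Matrix (Fin d) (Fin d) ℝ) : ℝ :=
  ‖Matrix.toEuclideanCLM (𝕜 := ℝ) M‖

/-- The ordered product `P_k ⋯ P₂ P₁` of the first `k` matrices of the sequence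
`P₁, P₂, …`. -/
def prodSeq {d : ℕ} (P : ℕ → Matrix (Fin d) (Fin d) ℝ) : ℕ → Matrix (Fin d) (Fin d) ℝ
  | 0 => 1
  | k + 1 => P (k + 1) * prodSeq P k

/-!
An orthogonal projection `P` is paracontracting: `‖P x‖ ≤ ‖x‖`, and by Pythagoras equality forces
`P x = x`. Paracontracting maps are closed under composition, and a vector whose norm a
composition preserves is fixed by every factor. So a unit vector `x` with `‖P_q ⋯ P₁ x‖ = 1` would
lie in `⋂ 𝒫_k = {0}`; since the unit sphere is compact, the operator norm is attained at some unit
vector and is therefore `< 1`.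
-/

open Function

/-- Paracontracting in the sense of Nelson and Neumann. -/
structure IsParacontracting {E : Type*} [Norm E] (f : E → E) : Prop where
  norm_apply_le : ∀ x, ‖f x‖ ≤ ‖x‖
  isFixedPt_of_norm_apply_eq : ∀ x, ‖f x‖ = ‖x‖ → IsFixedPt f x

namespace IsParacontracting

variable {E : Type*} [Norm E] {f g : E → E}

protected theorem id : IsParacontracting (id : E → E) :=
  ⟨fun _ => le_rfl, fun _ _ => rfl⟩

theorem isFixedPt_of_norm_comp_eq (hf : IsParacontracting f) (hg : IsParacontracting g) {x : E}
    (h : ‖f (g x)‖ = ‖x‖) : IsFixedPt f x ∧ IsFixedPt g x := by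
  have hgx : IsFixedPt g x := hg.isFixedPt_of_norm_apply_eq x <|
    le_antisymm (hg.norm_apply_le x) (h ▸ hf.norm_apply_le (g x))
  rw [hgx.eq] at h
  exact ⟨hf.isFixedPt_of_norm_apply_eq x h, hgx⟩

theorem comp (hf : IsParacontracting f) (hg : IsParacontracting g) :
    IsParacontracting (f ∘ g) where
  norm_apply_le x := (hf.norm_apply_le (g x)).trans (hg.norm_apply_le x)
  isFixedPt_of_norm_apply_eq x h := by
    obtain ⟨hfx, hgx⟩ := isFixedPt_of_norm_comp_eq hf hg h
    exact hfx.comp hgx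

theorem isFixedPt_of_isFixedPt_comp (hf : IsParacontracting f) (hg : IsParacontracting g)
    {x : E} (h : IsFixedPt (f ∘ g) x) : IsFixedPt f x ∧ IsFixedPt g x :=
  isFixedPt_of_norm_comp_eq hf hg (congrArg norm h)

theorem norm_lt_one {𝕜 : Type*} [NontriviallyNormedField 𝕜] [NormedAlgebra ℝ 𝕜]
    {F : Type*} [NormedAddCommGroup F] [NormedSpace 𝕜 F] [ProperSpace F] {T : F →L[𝕜] F}
    (hT : IsParacontracting T) (hfix : ∀ x, IsFixedPt T x → x = 0) : ‖T‖ < 1 := by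
  rcases (Metric.sphere (0 : F) 1).eq_empty_or_nonempty with hempty | hne
  · refine (T.opNorm_le_of_unit_norm le_rfl fun x hx => ?_).trans_lt one_pos
    simpa [hempty] using (mem_sphere_zero_iff_norm.mpr hx : x ∈ Metric.sphere (0 : F) 1)
  obtain ⟨x₀, hx₀, hmax⟩ :=
    (isCompact_sphere (0 : F) 1).exists_isMaxOn hne T.continuous.norm.continuousOn
  have hx₀1 : ‖x₀‖ = 1 := mem_sphere_zero_iff_norm.mp hx₀
  have hlt : ‖T x₀‖ < 1 := by
    refine lt_of_le_of_ne (hx₀1 ▸ hT.norm_apply_le x₀) fun h => ?_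
    have := hfix x₀ (hT.isFixedPt_of_norm_apply_eq x₀ (h.trans hx₀1.symm))
    simp [this] at hx₀1
  refine (T.opNorm_le_of_unit_norm (norm_nonneg _) fun x hx => ?_).trans_lt hlt
  exact hmax (mem_sphere_zero_iff_norm.mpr hx)

end IsParacontracting

theorem IsStarProjection.isParacontracting {𝕜 E : Type*} [RCLike 𝕜] [NormedAddCommGroup E]
    [InnerProductSpace 𝕜 E] [CompleteSpace E] {p : E →L[𝕜] E} (hp : IsStarProjection p) :
    IsParacontracting p := by
  obtain ⟨K, _, rfl⟩ := isStarProjection_iff_eq_starProjection.mp hp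
  exact ⟨K.norm_starProjection_apply_le, fun x h =>
    K.starProjection_eq_self_iff.mpr ((K.mem_iff_norm_starProjection x).mpr h)⟩

section ProdSeq

variable {d : ℕ} {P : ℕ → Matrix (Fin d) (Fin d) ℝ}

theorem isStarProjection_toEuclideanCLM {M : Matrix (Fin d) (Fin d) ℝ} (hsymm : Mᵀ = M)
    (hidem : M * M = M) : IsStarProjection (toEuclideanCLM (𝕜 := ℝ) M) :=
  IsStarProjection.map ⟨hidem, by rwa [IsSelfAdjoint, star_eq_conjTranspose,
    conjTranspose_eq_transpose_of_trivial]⟩ _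

theorem toEuclideanCLM_prodSeq_succ (k : ℕ) :
    ⇑(toEuclideanCLM (𝕜 := ℝ) (prodSeq P (k + 1))) =
      toEuclideanCLM (𝕜 := ℝ) (P (k + 1)) ∘ toEuclideanCLM (𝕜 := ℝ) (prodSeq P k) := by
  rw [prodSeq, map_mul]
  rfl

theorem isParacontracting_toEuclideanCLM_prodSeq {n : ℕ}
    (hP : ∀ k ∈ Finset.Icc 1 n, IsParacontracting (toEuclideanCLM (𝕜 := ℝ) (P k))) :
    IsParacontracting (toEuclideanCLM (𝕜 := ℝ) (prodSeq P n)) := by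
  induction n with
  | zero => simpa [prodSeq] using IsParacontracting.id
  | succ n ih =>
    rw [toEuclideanCLM_prodSeq_succ]
    exact (hP _ (by simp)).comp (ih fun k hk => hP k (Finset.Icc_subset_Icc_right n.le_succ hk))

theorem isFixedPt_of_isFixedPt_toEuclideanCLM_prodSeq {n : ℕ}
    (hP : ∀ k ∈ Finset.Icc 1 n, IsParacontracting (toEuclideanCLM (𝕜 := ℝ) (P k)))
    {x : EuclideanSpace ℝ (Fin d)} (hx : IsFixedPt (toEuclideanCLM (𝕜 := ℝ) (prodSeq P n)) x) :
    ∀ k ∈ Finset.Icc 1 n, IsFixedPt (toEuclideanCLM (𝕜 := ℝ) (P k)) x := by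
  induction n with
  | zero => simp
  | succ n ih =>
    have hP' : ∀ k ∈ Finset.Icc 1 n, IsParacontracting (toEuclideanCLM (𝕜 := ℝ) (P k)) :=
      fun k hk => hP k (Finset.Icc_subset_Icc_right n.le_succ hk)
    rw [IsFixedPt, toEuclideanCLM_prodSeq_succ] at hx
    obtain ⟨hlast, hinit⟩ := (hP _ (by simp)).isFixedPt_of_isFixedPt_comp
      (isParacontracting_toEuclideanCLM_prodSeq hP') hx
    intro k hk
    obtain ⟨hk1, hkn⟩ := Finset.mem_Icc.mp hk
    rcases hkn.eq_or_lt with rfl | hlt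
    · exact hlast
    · exact ih hP' hinit k (Finset.mem_Icc.mpr ⟨hk1, Nat.le_of_lt_succ hlt⟩)

end ProdSeq

theorem projection_product_contraction_general {d q : ℕ}
    (P : ℕ → Matrix (Fin d) (Fin d) ℝ)
    (hsymm : ∀ k, 1 ≤ k → k ≤ q → (P k)ᵀ = P k)
    (hidem : ∀ k, 1 ≤ k → k ≤ q → P k * P k = P k)
    (hinter : (⋂ k ∈ Finset.Icc 1 q, {x : Fin d → ℝ | P k *ᵥ x = x}) = {0}) :
    opNorm2 (prodSeq P q) < 1 := by
  have hP : ∀ k ∈ Finset.Icc 1 q, IsParacontracting (toEuclideanCLM (𝕜 := ℝ) (P k)) := by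
    intro k hk
    obtain ⟨h1, hq⟩ := Finset.mem_Icc.mp hk
    exact (isStarProjection_toEuclideanCLM (hsymm k h1 hq) (hidem k h1 hq)).isParacontracting
  refine (isParacontracting_toEuclideanCLM_prodSeq hP).norm_lt_one fun x hx => ?_
  have hmem : WithLp.ofLp x ∈ ⋂ k ∈ Finset.Icc 1 q, {x : Fin d → ℝ | P k *ᵥ x = x} :=
    Set.mem_iInter₂.mpr fun k hk =>
      congrArg WithLp.ofLp (isFixedPt_of_isFixedPt_toEuclideanCLM_prodSeq hP hx k hk)
  rw [hinter, Set.mem_singleton_iff] at hmem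
  exact (WithLp.ofLp_eq_zero 2).mp hmem

/-- Let `P₁, …, P_q` be orthogonal projection matrices in
`ℝ^{d×d}` (symmetric idempotents) onto subspaces `𝒫₁, …, 𝒫_q` (their fixed-point
sets). If `⋂_{k=1}^q 𝒫_k = {0}`, then the operator 2-norm of the product
`P_q ⋯ P₂ P₁` is strictly less than 1. -/
theorem projection_product_contraction {d q : ℕ} (hq : 1 ≤ q)
    (P : ℕ → Matrix (Fin d) (Fin d) ℝ)
    (hsymm : ∀ k, 1 ≤ k → k ≤ q → (P k)ᵀ = P k)
    (hidem : ∀ k, 1 ≤ k → k ≤ q → P k * P k = P k)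
    (hinter : (⋂ k ∈ Finset.Icc 1 q, {x : Fin d → ℝ | P k *ᵥ x = x}) = {0}) :
    opNorm2 (prodSeq P q) < 1 :=
  projection_product_contraction_general P hsymm hidem hinter
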